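/- arXiv:1606.00596 — 3 statements merged into one kernel-verified Lean document; each statement's English description precedes it below -/
import Mathlib

section
/- Let M be a finite nonempty set of words of length D over a two-letter alphabet {x₀, x₁}. Then there exists a word m ∈ M and a set of positions I ⊆ {1,...,D} with |I| ≤ log₂ |M| such that for every word m' ∈ M with m' ≠ m, there is some position i ∈ I with m[i] ≠ m'[i]. -/
/-- Isolation lemma: every nonempty finite set `M` of words of length `D` over a
two-letter alphabet (modeled as functions `Fin D → Bool`) has an isolating index set
`I` of size at most `log₂ |M|` with isolated word `m`: no other word of `M` agrees
with `m` on all positions in `I`. -/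
theorem isolating_index_set {D : ℕ} (M : Finset (Fin D → Bool)) (hM : M.Nonempty) :
    ∃ m ∈ M, ∃ I : Finset (Fin D), I.card ≤ Nat.log 2 M.card ∧
      ∀ m' ∈ M, m' ≠ m → ∃ i ∈ I, m i ≠ m' i := by
  revert hM
  induction M using Finset.strongInduction with
  | _ M ih =>
  intro hM
  rcases hM with ⟨a, ha⟩
  by_cases h1 : ∀ b ∈ M, b = a
  · exact ⟨a, ha, ∅, by simp, fun m' hm' hne => absurd (h1 m' hm') hne⟩
  · push_neg at h1
    obtain ⟨b, hb, hba⟩ := h1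
    obtain ⟨i, hi⟩ : ∃ i, b i ≠ a i := by
      by_contra h; push_neg at h; exact hba (funext h)
    have hcard : (M.filter (fun f => f i = false)).card
        + (M.filter (fun f => f i = true)).card = M.card := by
      have h := Finset.card_filter_add_card_filter_not (s := M)
        (p := fun f => f i = false)
      simpa using h
    have hne : ∀ c : Bool, (M.filter (fun f => f i = c)).Nonempty := by
      intro c
      rcases Bool.eq_or_eq_not c (a i) with h | h
      · exact ⟨a, Finset.mem_filter.mpr ⟨ha, h.symm⟩⟩
      · refine ⟨b, Finset.mem_filter.mpr ⟨hb, ?_⟩⟩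
        subst h
        cases h' : a i <;> simp [h'] at hi ⊢ <;> simp [hi]
    have key : ∀ c : Bool, 2 * (M.filter (fun f => f i = c)).card ≤ M.card →
        ∃ m ∈ M, ∃ I : Finset (Fin D), I.card ≤ Nat.log 2 M.card ∧
          ∀ m' ∈ M, m' ≠ m → ∃ j ∈ I, m j ≠ m' j := by
      intro c hc
      obtain ⟨M', hM'⟩ : ∃ M'', M'' = M.filter (fun f => f i = c) := ⟨_, rfl⟩
      rw [← hM'] at hc
      have hne' : M'.Nonempty := hM' ▸ hne c
      have hsub : M' ⊆ M := hM' ▸ Finset.filter_subset _ _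
      clear hne hcard hba hb
      have hpos : 1 ≤ M'.card := Finset.card_pos.mpr hne'
      have hlt : M'.card < M.card := lt_of_lt_of_le (by omega) hc
      have hss : M' ⊂ M :=
        hsub.ssubset_of_ne (by intro h; rw [h] at hlt; exact lt_irrefl _ hlt)
      obtain ⟨m, hmM', I', hI'card, hI'iso⟩ := ih M' hss hne'
      have hmM : m ∈ M := hsub hmM'
      have hmi : m i = c := by
        have h := hmM'; rw [hM'] at h; exact (Finset.mem_filter.mp h).2
      refine ⟨m, hmM, insert i I', ?_, ?_⟩
      · have h1 : I'.card + 1 ≤ Nat.log 2 M'.card + 1 := by omega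
        have h2 : Nat.log 2 M'.card + 1 = Nat.log 2 (M'.card * 2) :=
          (Nat.log_mul_base (by norm_num) (by omega)).symm
        have h3 : Nat.log 2 (M'.card * 2) ≤ Nat.log 2 M.card :=
          Nat.log_mono_right (by omega)
        calc (insert i I').card ≤ I'.card + 1 := Finset.card_insert_le _ _
          _ ≤ Nat.log 2 M.card := by omega
      · intro m' hm' hne''
        by_cases hmi' : m' i = c
        · obtain ⟨j, hj, hjne⟩ := hI'iso m' (by rw [hM']; exact Finset.mem_filter.mpr ⟨hm', hmi'⟩) hne''
          exact ⟨j, Finset.mem_insert_of_mem hj, hjne⟩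
        · exact ⟨i, Finset.mem_insert_self _ _, by rw [hmi]; exact fun h => hmi' h.symm⟩
    rcases le_total (M.filter (fun f => f i = false)).card
        (M.filter (fun f => f i = true)).card with h | h
    · exact key false (by rw [two_mul, ← hcard]; exact Nat.add_le_add_left h _)
    · exact key true (by rw [two_mul, ← hcard]; exact Nat.add_le_add_right h _)
end

section
/- Let F be a field, k ≥ 1, and let f = Σ_{j=1}^t c_j w_j ∈ F⟨x₀, x₁⟩ be a polynomial with nonzero coefficients c_j and distinct words w_j. Let D = deg f, and suppose there is a word w₁ of length D with nonzero coefficient and an increasing k-sequence I in {1,...,D} such that every other word of f of length D differs from w₁ at some position in I. Let M_{x₀}, M_{x₁} be the (k+1)×(k+1) bidiagonal substitution matrices over R = F[ξ₁,...,ξ_{k+1}, y_{0,1},y_{1,1},...,y_{0,k},y_{1,k}] (diagonals ξ_i, superdiagonal of M_{x_b} equal to y_{b,i}). Then the (1, k+1) entry of f(M_{x₀}, M_{x₁}) is a nonzero polynomial in R; in fact the coefficient of the monomial ξ_I · y_{b_{i₁},1} ⋯ y_{b_{i_k},k} (determined by w₁ and I) in that entry equals c₁. -/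
noncomputable section
open MvPolynomial

/-- The variables of the commutative polynomial ring
`R = F[ξ₁,…,ξ_{k+1}, y_{0,1}, y_{1,1}, …, y_{0,k}, y_{1,k}]`:
`Sum.inl i` is the block variable `ξ_{i+1}`, and `Sum.inr (b, ℓ)` is the
index variable `y_{b,ℓ+1}`. -/
abbrev SubVar (k : ℕ) := Fin (k + 1) ⊕ Bool × Fin k

/-- The `(k+1) × (k+1)` upper bidiagonal substitution matrix `M_{x_b}`:
diagonal entries `ξ_i`, superdiagonal entries `y_{b,i}`, zeros elsewhere. -/
def subMat (F : Type*) [Field F] (k : ℕ) (b : Bool) :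
    Matrix (Fin (k + 1)) (Fin (k + 1)) (MvPolynomial (SubVar k) F) :=
  Matrix.of fun i j =>
    if i = j then X (Sum.inl i)
    else if h : (i : ℕ) + 1 = (j : ℕ) then
      X (Sum.inr (b, ⟨i, by have := j.isLt; omega⟩))
    else 0

/-- The exponent of the block variable `ξ_{i+1}` in the monomial `ξ_J` associated to a
strictly increasing sequence `J = (j₁ < ⋯ < j_k)` of positions in `{1,…,D}` (here
`J : Fin k → Fin D` is 0-based, with `j_{ℓ+1} = J ℓ + 1`): the exponent vector is
`(j₁ − 1, j₂ − j₁ − 1, …, j_k − j_{k−1} − 1, D − j_k)`. -/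
def xiExp (k D : ℕ) (J : Fin k → Fin D) (i : Fin (k + 1)) : ℕ :=
  (if h : (i : ℕ) < k then (J ⟨i, h⟩ : ℕ) + 1 else D + 1)
    - (if h : 0 < (i : ℕ) then (J ⟨(i : ℕ) - 1, by have := i.isLt; omega⟩ : ℕ) + 1 else 0)
    - 1

/-- Evaluation of a bivariate noncommutative polynomial `f ∈ F⟨x₀,x₁⟩` (modeled as the
monoid algebra of the free monoid on `Bool`) at the substitution matrices, via the
`F`-algebra homomorphism `x_b ↦ M_{x_b}`. -/
def evalSub (F : Type*) [Field F] (k : ℕ) :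
    MonoidAlgebra F (FreeMonoid Bool) →ₐ[F]
      Matrix (Fin (k + 1)) (Fin (k + 1)) (MvPolynomial (SubVar k) F) :=
  MonoidAlgebra.lift F _ _ (FreeMonoid.lift (subMat F k))

/-!
Reading a word letter by letter, the first row of the product of substitution matrices evolves
like an automaton which, in state `j`, either stays (factor `ξ_j`) or advances to `j + 1`
(factor `y_{b,j}`). The monomial of a run determines the length of the word, the positions where
it advanced and the letters read there. Hence, by induction on the word `w`, the coefficient of
the monomial of `(w₁, I)` in the `(1, k+1)` entry of `M_w` is `1` if `w` has length `D` and
agrees with `w₁` on `I`, and `0` otherwise; by the isolation hypothesis only `w₁` survives in `f`.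
-/

def blockStart (J : ℕ → ℕ) : ℕ → ℕ
  | 0 => 0
  | i + 1 => J i + 1

/-- The monomial of the run on a word of length `n` that ends in state `j` after advancing at
positions `J 0 < ⋯ < J (j - 1)`, where it reads the letters of `u`: for `i < j` the run stays in
state `i` at the positions `blockStart J i ≤ t < J i`, and in state `j` for
`blockStart J j ≤ t < n`. -/
def pathMonomial (k : ℕ) (J : ℕ → ℕ) (u : List Bool) (j n : ℕ) : SubVar k →₀ ℕ :=
  Finsupp.equivFunOnFinite.symm fun
    | .inl i => if (i : ℕ) < j then J i - blockStart J i
        else if (i : ℕ) = j then n - blockStart J i else 0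
    | .inr (b, ℓ) => if (ℓ : ℕ) < j ∧ u[J ℓ]? = some b then 1 else 0

section

variable {F : Type*} [Field F] {k : ℕ}

section

variable (J : ℕ → ℕ) (u : List Bool)

@[simp]
theorem pathMonomial_inl (j n : ℕ) (i : Fin (k + 1)) :
    pathMonomial k J u j n (.inl i) =
      if (i : ℕ) < j then J i - blockStart J i
      else if (i : ℕ) = j then n - blockStart J i else 0 := rfl

@[simp]
theorem pathMonomial_inr (j n : ℕ) (b : Bool) (ℓ : Fin k) :
    pathMonomial k J u j n (.inr (b, ℓ)) = if (ℓ : ℕ) < j ∧ u[J ℓ]? = some b then 1 else 0 :=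
  rfl

theorem pathMonomial_zero (n : ℕ) : pathMonomial k J u 0 n = Finsupp.single (.inl 0) n := by
  ext (i | ⟨b, ℓ⟩)
  · rcases eq_or_ne i 0 with rfl | hi
    · simp [blockStart]
    · simp [hi]
  · simp

theorem pathMonomial_sub_single_inl (j : Fin (k + 1)) (n : ℕ) :
    pathMonomial k J u j n - Finsupp.single (.inl j) 1 = pathMonomial k J u j (n - 1) := by
  ext (i | ⟨b, ℓ⟩)
  · by_cases hi : i = j
    · subst hi
      simp
      omega
    · simp [Ne.symm hi, Fin.val_ne_of_ne hi]
  · simp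

theorem pathMonomial_succ_sub_single_inr (j : Fin k) {b : Bool} (hb : u[J j]? = some b) :
    pathMonomial k J u (j + 1) (J j + 1) - Finsupp.single (.inr (b, j)) 1 =
      pathMonomial k J u j (J j) := by
  ext (⟨i, hi⟩ | ⟨c, ℓ⟩)
  · simp only [Finsupp.coe_tsub, Pi.sub_apply, pathMonomial_inl, Finsupp.single_apply,
      reduceCtorEq, if_false, Nat.sub_zero, Nat.lt_succ_iff]
    split_ifs <;> first | omega | (subst_vars; simp [blockStart])
  · rcases eq_or_ne ℓ j with rfl | hℓ
    · by_cases hc : b = c <;> simp [hb, hc]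
    · have hlt : (ℓ : ℕ) < j + 1 ↔ (ℓ : ℕ) < j := by
        have := Fin.val_ne_of_ne hℓ
        omega
      simp only [Finsupp.coe_tsub, Pi.sub_apply, pathMonomial_inr, Finsupp.single_apply,
        Sum.inr.injEq, Prod.mk.injEq, hℓ.symm, and_false, if_false, Nat.sub_zero, hlt]

end

theorem mul_subMat_apply_zero
    (A : Matrix (Fin (k + 1)) (Fin (k + 1)) (MvPolynomial (SubVar k) F)) (b : Bool)
    (i : Fin (k + 1)) :
    (A * subMat F k b) i 0 = A i 0 * X (.inl 0) := by
  rw [Matrix.mul_apply, Finset.sum_eq_single 0]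
  · simp [subMat]
  · intro j _ hj
    simp [subMat, hj]
  · simp

theorem mul_subMat_apply_succ
    (A : Matrix (Fin (k + 1)) (Fin (k + 1)) (MvPolynomial (SubVar k) F)) (b : Bool)
    (i : Fin (k + 1)) (j : Fin k) :
    (A * subMat F k b) i j.succ =
      A i j.succ * X (.inl j.succ) + A i j.castSucc * X (.inr (b, j)) := by
  have hne : j.castSucc ≠ j.succ := Fin.castSucc_lt_succ.ne
  rw [Matrix.mul_apply, ← Finset.sum_subset (Finset.subset_univ {j.succ, j.castSucc})]
  · rw [Finset.sum_pair hne.symm]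
    simp [subMat, hne]
  · intro m _ hm
    simp only [Finset.mem_insert, Finset.mem_singleton, not_or] at hm
    have : (m : ℕ) ≠ j := fun h => hm.2 (Fin.ext h)
    simp [subMat, hm.1, this]

theorem prod_subMat_apply_zero_zero (w : List Bool) :
    (w.map (subMat F k)).prod 0 0 = X (.inl 0) ^ w.length := by
  induction w using List.reverseRecOn with
  | nil => simp
  | append_singleton w b ih =>
    rw [List.map_append, List.prod_append, List.map_singleton, List.prod_singleton,
      mul_subMat_apply_zero, ih, List.length_append, List.length_singleton, pow_succ]

theorem coeff_prod_subMat_eq_zero (w : List Bool) {j i : Fin (k + 1)} (hji : j < i)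
    {e : SubVar k →₀ ℕ} (he : e (.inl i) ≠ 0) :
    coeff e ((w.map (subMat F k)).prod 0 j) = 0 := by
  induction w using List.reverseRecOn generalizing j e with
  | nil =>
    have : (0 : SubVar k →₀ ℕ) ≠ e := fun h => he (by simp [← h])
    rw [List.map_nil, List.prod_nil, Matrix.one_apply]
    split_ifs <;> simp [coeff_one, this]
  | append_singleton w b ih =>
    have hsub : ∀ s : SubVar k, s ≠ .inl i →
        (e - Finsupp.single s 1 : SubVar k →₀ ℕ) (.inl i) ≠ 0 := by
      intro s hs
      simpa [Finsupp.single_apply, hs] using he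
    rw [List.map_append, List.prod_append, List.map_singleton, List.prod_singleton]
    cases j using Fin.cases with
    | zero =>
      rw [mul_subMat_apply_zero, coeff_mul_X', ih hji (hsub _ (by simpa using hji.ne)), ite_self]
    | succ j =>
      have hj : j.castSucc < i := Fin.castSucc_lt_succ.trans hji
      rw [mul_subMat_apply_succ, coeff_add, coeff_mul_X', coeff_mul_X',
        ih hji (hsub (.inl j.succ) (by simpa using hji.ne)), ih hj (hsub (.inr (b, j)) (by simp))]
      simp

section

variable (J : ℕ → ℕ) (u : List Bool)

theorem coeff_pathMonomial_prod_subMat_zero (w : List Bool) (n : ℕ) :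
    coeff (pathMonomial k J u 0 n) ((w.map (subMat F k)).prod 0 0) =
      if w.length = n then 1 else 0 := by
  rw [pathMonomial_zero, prod_subMat_apply_zero_zero, coeff_X_pow]
  simp [(Finsupp.single_injective _).eq_iff, eq_comm]

theorem coeff_pathMonomial_mul_X_inl (p : MvPolynomial (SubVar k) F) (j : Fin (k + 1))
    (n : ℕ) :
    coeff (pathMonomial k J u j n) (p * X (.inl j)) =
      if blockStart J j < n then coeff (pathMonomial k J u j (n - 1)) p else 0 := by
  rw [coeff_mul_X']
  have hmem : Sum.inl j ∈ (pathMonomial k J u j n).support ↔ blockStart J j < n := by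
    simp [Nat.sub_ne_zero_iff_lt]
  rw [if_congr hmem rfl rfl, pathMonomial_sub_single_inl]

theorem coeff_pathMonomial_succ_mul_X_inr (w : List Bool) (b : Bool) (j : Fin k) {n : ℕ}
    (hn : J j < n) :
    coeff (pathMonomial k J u (j + 1) n)
        ((w.map (subMat F k)).prod 0 j.castSucc * X (.inr (b, j))) =
      if n = J j + 1 ∧ u[J j]? = some b then
        coeff (pathMonomial k J u j (J j)) ((w.map (subMat F k)).prod 0 j.castSucc)
      else 0 := by
  rw [coeff_mul_X', ite_and]
  have hmem : Sum.inr (b, j) ∈ (pathMonomial k J u (j + 1) n).support ↔ u[J j]? = some b := by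
    simp
  by_cases hnj : n = J j + 1
  · by_cases hb : u[J j]? = some b
    · subst hnj
      rw [if_pos (hmem.mpr hb), if_pos rfl, if_pos hb, pathMonomial_succ_sub_single_inr J u j hb]
    · rw [if_neg (mt hmem.mp hb), if_neg hb, ite_self]
  · -- the remaining monomial still contains `ξ_{j+1}`, which never occurs in column `j`
    rw [if_neg hnj, ite_eq_right_iff]
    refine fun _ => coeff_prod_subMat_eq_zero w (i := j.succ) Fin.castSucc_lt_succ ?_
    simp [blockStart]
    omega

end

theorem forall_getElem?_append_eq_iff {α : Type*} {w v u : List α} {J : ℕ → ℕ} {m : ℕ}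
    (h : ∀ ℓ < m, J ℓ < w.length) :
    (∀ ℓ < m, (w ++ v)[J ℓ]? = u[J ℓ]?) ↔ ∀ ℓ < m, w[J ℓ]? = u[J ℓ]? :=
  forall₂_congr fun ℓ hℓ => by rw [List.getElem?_append_left (h ℓ hℓ)]

section

variable {J : ℕ → ℕ}

theorem blockStart_le (hJ : StrictMonoOn J (Set.Iio k)) {j : ℕ} (hj : j < k) :
    blockStart J j ≤ J j := by
  cases j with
  | zero => exact Nat.zero_le _
  | succ j => exact hJ (Set.mem_Iio.mpr (by omega)) (Set.mem_Iio.mpr hj) (Nat.lt_succ_self j)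

theorem coeff_pathMonomial_prod_subMat (u : List Bool) (hJ : StrictMonoOn J (Set.Iio k))
    (w : List Bool) (j : Fin (k + 1)) {n : ℕ} (hn : blockStart J j ≤ n) :
    coeff (pathMonomial k J u j n) ((w.map (subMat F k)).prod 0 j) =
      if w.length = n ∧ ∀ ℓ < (j : ℕ), w[J ℓ]? = u[J ℓ]? then 1 else 0 := by
  induction w using List.reverseRecOn generalizing j n with
  | nil =>
    cases j using Fin.cases with
    | zero => simpa using coeff_pathMonomial_prod_subMat_zero (F := F) J u [] n
    | succ j =>
      simp only [Fin.val_succ, blockStart] at hn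
      simp [(Fin.succ_ne_zero j).symm]
      omega
  | append_singleton w b ih =>
    cases j using Fin.cases with
    | zero => simpa using coeff_pathMonomial_prod_subMat_zero (F := F) J u (w ++ [b]) n
    | succ j =>
      simp only [Fin.val_succ, blockStart] at hn
      obtain ⟨n, rfl⟩ : ∃ m, n = m + 1 := ⟨n - 1, by omega⟩
      rw [List.map_append, List.prod_append, List.map_singleton, List.prod_singleton,
        mul_subMat_apply_succ, coeff_add, coeff_pathMonomial_mul_X_inl, Fin.val_succ,
        coeff_pathMonomial_succ_mul_X_inr J u w b j hn]
      simp only [Nat.add_sub_cancel, List.length_append, List.length_singleton,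
        Nat.add_right_cancel_iff]
      rcases (Nat.le_of_succ_le_succ hn).lt_or_eq with hlt | rfl
      · -- the run is already in state `j + 1` before the last letter
        have ih_succ := ih j.succ (n := n) hlt
        rw [Fin.val_succ] at ih_succ
        rw [if_pos (show blockStart J (j + 1) < n + 1 by simpa [blockStart]),
          if_neg (show ¬(n = J j ∧ _) by omega), add_zero, ih_succ]
        refine if_congr (and_congr_right fun hl => ?_) rfl rfl
        rw [forall_getElem?_append_eq_iff fun ℓ hℓ =>
          (hJ.monotoneOn (Set.mem_Iio.mpr (by omega)) (Set.mem_Iio.mpr j.isLt)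
            (Nat.le_of_lt_succ hℓ)).trans_lt (hl ▸ hlt)]
      · -- the run advances to state `j + 1` at the last letter, which sits at position `J j`
        have ih_cast := ih j.castSucc (n := J j) (blockStart_le hJ j.isLt)
        rw [Fin.val_castSucc] at ih_cast
        rw [if_neg (show ¬blockStart J (j + 1) < J j + 1 from lt_irrefl _), zero_add, ite_and,
          if_pos rfl, ih_cast, ← ite_and]
        refine if_congr ?_ rfl rfl
        rw [Nat.forall_lt_succ_right, and_comm (a := u[J j]? = some b), and_assoc]
        refine and_congr_right fun hl => ?_
        rw [forall_getElem?_append_eq_iff fun ℓ hℓ =>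
          hl ▸ hJ (Set.mem_Iio.mpr (by omega)) (Set.mem_Iio.mpr j.isLt) hℓ,
          ← hl, List.getElem?_concat_length, eq_comm]

end

theorem evalSub_apply (f : MonoidAlgebra F (FreeMonoid Bool)) :
    evalSub F k f = ∑ w ∈ f.coeff.support, f.coeff w • (w.toList.map (subMat F k)).prod := by
  simp only [evalSub, MonoidAlgebra.lift_apply, Finsupp.sum, FreeMonoid.lift_apply]

def extendNat {D : ℕ} (I : Fin k → Fin D) (ℓ : ℕ) : ℕ := if h : ℓ < k then I ⟨ℓ, h⟩ else 0

theorem extendNat_strictMonoOn {D : ℕ} {I : Fin k → Fin D} (hI : StrictMono I) :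
    StrictMonoOn (extendNat I) (Set.Iio k) := by
  intro a ha b hb hab
  simp only [Set.mem_Iio] at ha hb
  simpa [extendNat, ha, hb] using hI (show (⟨a, ha⟩ : Fin k) < ⟨b, hb⟩ from hab)

theorem blockStart_extendNat_le {D : ℕ} (I : Fin k → Fin D) :
    blockStart (extendNat I) k ≤ D := by
  cases k with
  | zero => exact Nat.zero_le D
  | succ k => simp [blockStart, extendNat]

theorem xiMonomial_eq_pathMonomial {D : ℕ} (I : Fin k → Fin D) (u : List Bool)
    (hu : u.length = D) :
    (∑ i : Fin (k + 1), Finsupp.single (Sum.inl i : SubVar k) (xiExp k D I i)) +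
        ∑ ℓ : Fin k, Finsupp.single (Sum.inr (u.get (Fin.cast hu.symm (I ℓ)), ℓ) : SubVar k) 1 =
      pathMonomial k (extendNat I) u k D := by
  ext (⟨i, hi⟩ | ⟨b, ℓ⟩) <;>
    simp only [Finsupp.add_apply, Finsupp.finsetSum_apply, Finsupp.single_apply, Sum.inl.injEq,
      Sum.inr.injEq, Prod.mk.injEq, reduceCtorEq, if_false, Finset.sum_const_zero,
      Finset.sum_ite_eq', Finset.mem_univ, if_true, add_zero, zero_add, pathMonomial_inl,
      pathMonomial_inr]
  · rcases i with _ | i <;> simp only [xiExp, blockStart, extendNat, Nat.add_sub_cancel] <;>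
      split_ifs <;> omega
  · rw [Finset.sum_eq_single ℓ (fun m _ hm => if_neg (fun h => hm h.2)) (by simp)]
    simp [extendNat, List.getElem?_eq_getElem (hu ▸ (I ℓ).isLt : (I ℓ : ℕ) < u.length)]

end

theorem corner_entry_ne_zero_general (F : Type*) [Field F] (k : ℕ)
    (f : MonoidAlgebra F (FreeMonoid Bool))
    (D : ℕ)
    (w₁ : FreeMonoid Bool) (hw₁ : w₁ ∈ f.coeff.support)
    (hlen : (FreeMonoid.toList w₁).length = D)
    (I : Fin k → Fin D) (hI : StrictMono I)
    (hiso : ∀ w ∈ f.coeff.support, ∀ hw : (FreeMonoid.toList w).length = D, w ≠ w₁ →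
      ∃ ℓ : Fin k, (FreeMonoid.toList w).get (Fin.cast hw.symm (I ℓ))
        ≠ (FreeMonoid.toList w₁).get (Fin.cast hlen.symm (I ℓ))) :
    MvPolynomial.coeff
        ((∑ i : Fin (k + 1), Finsupp.single (Sum.inl i : SubVar k) (xiExp k D I i)) +
          ∑ ℓ : Fin k, Finsupp.single
            (Sum.inr ((FreeMonoid.toList w₁).get (Fin.cast hlen.symm (I ℓ)), ℓ) : SubVar k) 1)
        (evalSub F k f 0 (Fin.last k)) = f.coeff w₁
      ∧ evalSub F k f 0 (Fin.last k) ≠ 0 := by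
  have hword : ∀ w : FreeMonoid Bool,
      coeff (pathMonomial k (extendNat I) w₁.toList k D)
          ((w.toList.map (subMat F k)).prod 0 (Fin.last k)) =
        if w.toList.length = D ∧ ∀ ℓ < k, w.toList[extendNat I ℓ]? = w₁.toList[extendNat I ℓ]?
        then 1 else 0 := fun w =>
    coeff_pathMonomial_prod_subMat _ (extendNat_strictMonoOn hI) _ (Fin.last k)
      (blockStart_extendNat_le I)
  rw [xiMonomial_eq_pathMonomial I _ hlen]
  have hcoeff : coeff (pathMonomial k (extendNat I) w₁.toList k D)
      (evalSub F k f 0 (Fin.last k)) = f.coeff w₁ := by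
    rw [evalSub_apply, Matrix.sum_apply, coeff_sum, Finset.sum_eq_single_of_mem w₁ hw₁]
    · simp [hword, hlen]
    · intro w hw hne
      rw [Matrix.smul_apply, coeff_smul, hword, if_neg, smul_zero]
      rintro ⟨hl, hagree⟩
      obtain ⟨ℓ, hℓ⟩ := hiso w hw hl hne
      apply hℓ
      simpa [extendNat, List.getElem?_eq_getElem, hl, hlen] using hagree ℓ ℓ.isLt
  refine ⟨hcoeff, fun h0 => ?_⟩
  rw [h0, coeff_zero] at hcoeff
  exact Finsupp.mem_support_iff.mp hw₁ hcoeff.symm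

/-- If `w₁` is a word of maximal length `D` in the support of `f` and `I` is an isolating
increasing `k`-sequence for it among the degree-`D` words of `f`, then the coefficient of
the monomial `ξ_I · y_{b_{i₁},1} ⋯ y_{b_{i_k},k}` (determined by `w₁` and `I`) in the
`(1, k+1)` entry of `f(M_{x₀}, M_{x₁})` equals the coefficient of `w₁` in `f`; in
particular that entry is a nonzero polynomial. -/
theorem corner_entry_ne_zero (F : Type*) [Field F] (k : ℕ) (hk : 1 ≤ k)
    (f : MonoidAlgebra F (FreeMonoid Bool)) (hf : f ≠ 0)
    (D : ℕ) (hD : D = f.coeff.support.sup fun w => w.length)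
    (w₁ : FreeMonoid Bool) (hw₁ : w₁ ∈ f.coeff.support)
    (hlen : (FreeMonoid.toList w₁).length = D)
    (I : Fin k → Fin D) (hI : StrictMono I)
    (hiso : ∀ w ∈ f.coeff.support, ∀ hw : (FreeMonoid.toList w).length = D, w ≠ w₁ →
      ∃ ℓ : Fin k, (FreeMonoid.toList w).get (Fin.cast hw.symm (I ℓ))
        ≠ (FreeMonoid.toList w₁).get (Fin.cast hlen.symm (I ℓ))) :
    MvPolynomial.coeff
        ((∑ i : Fin (k + 1), Finsupp.single (Sum.inl i : SubVar k) (xiExp k D I i)) +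
          ∑ ℓ : Fin k, Finsupp.single
            (Sum.inr ((FreeMonoid.toList w₁).get (Fin.cast hlen.symm (I ℓ)), ℓ) : SubVar k) 1)
        (evalSub F k f 0 (Fin.last k)) = f.coeff w₁
      ∧ evalSub F k f 0 (Fin.last k) ≠ 0 :=
  corner_entry_ne_zero_general F k f D w₁ hw₁ hlen I hI hiso
end
end

section
/- Let F be a field with |F| > D and let f ∈ F⟨x₀, x₁⟩ be a nonzero noncommutative polynomial of degree D with t nonzero monomials. Then there exist matrices A₀, A₁ ∈ M_{k+1}(F), where k = ⌈log₂ t⌉, such that f(A₀, A₁) ≠ 0. -/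
/-!
Write `f = f(1) + ∑ₐ xₐ · xₐ⁻¹f`, where the left quotient `xₐ⁻¹f` collects the words of `f` that
begin with `a`, with that letter removed. It suffices that `f` does not vanish at generic
`(k+1) × (k+1)` matrices, whose entries are independent variables: the entries of the value are
then polynomials of degree at most `D < |F|`, one of them nonzero, so it has a non-root in `F`.

Nonvanishing at generic `n × n` matrices for every `n > ⌈log₂ t⌉` is proved by induction on `D`.
If `f(1) ≠ 0`, the zero matrices work. If only `g = x_c⁻¹f` is nonzero, then `f = x_c g`, where
`g` has as many monomials as `f`, and the generic matrix `X_c` has nonzero determinant, so it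
cancels. If two quotients are nonzero, the lighter one, `g = x_c⁻¹f`, has at most `t/2` monomials,
so it does not vanish at some `(n-1) × (n-1)` matrices `B`; bordering them as
`Aₐ = [[0, [a = c] eᵢ], [0, Bₐ]]` makes the top-right block of `f(A)` the `i`-th row of `g(B)`.
-/

noncomputable section

/-- Evaluation of a bivariate noncommutative polynomial `f ∈ F⟨x₀,x₁⟩` at a pair of
matrices, via the `F`-algebra homomorphism `x_b ↦ A b`. -/
def evalMat2 {F : Type*} [Field F] {k : ℕ} (A : Bool → Matrix (Fin k) (Fin k) F) :
    MonoidAlgebra F (FreeMonoid Bool) →ₐ[F] Matrix (Fin k) (Fin k) F :=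
  MonoidAlgebra.lift F _ _ (FreeMonoid.lift A)

open Finset

lemma FreeMonoid.of_mul_eq_of_mul_iff {α : Type*} {a b : α} {x y : FreeMonoid α} :
    of a * x = of b * y ↔ a = b ∧ x = y := by
  rw [← FreeMonoid.toList.injective.eq_iff]
  simp

lemma Nat.clog_two_add_one_le_of_two_mul_le {s t : ℕ} (hs : 0 < s) (h : 2 * s ≤ t) :
    Nat.clog 2 s + 1 ≤ Nat.clog 2 t := by
  have h2s : Nat.clog 2 (2 * s) = Nat.clog 2 s + 1 := by
    rw [Nat.clog_of_one_lt one_lt_two (by omega), show (2 * s + 2 - 1) / 2 = s by omega]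
  exact h2s ▸ Nat.clog_mono_right 2 h

lemma MvPolynomial.exists_eval_ne_zero_of_totalDegree_lt_card {R σ : Type*} [CommRing R]
    [IsDomain R] [Finite σ] {p : MvPolynomial σ R} (hp : p ≠ 0)
    (h : (p.totalDegree : ℕ∞) < ENat.card R) : ∃ v, eval v p ≠ 0 := by
  obtain ⟨S, hS⟩ : ∃ S : Finset R, p.totalDegree < #S := by
    cases finite_or_infinite R
    · have := Fintype.ofFinite R
      exact ⟨univ, by simpa [ENat.card_eq_coe_fintype_card] using h⟩
    · obtain ⟨S, hS⟩ := Infinite.exists_subset_card_eq R (p.totalDegree + 1)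
      exact ⟨S, by omega⟩
  by_contra! h0
  exact hp <| eq_zero_of_eval_zero_at_prod_finset p (fun _ => S)
    (fun i => (degreeOf_le_totalDegree p i).trans_lt hS) fun x _ => h0 x

namespace Matrix

lemma eq_zero_of_mul_eq_zero_of_det_ne_zero {R m n : Type*} [CommRing R] [IsDomain R]
    [Fintype m] [DecidableEq m] {M : Matrix m m R} (hM : M.det ≠ 0) {N : Matrix m n R}
    (h : M * N = 0) : N = 0 := by
  ext i j
  have hcol : M *ᵥ (fun k => N k j) = 0 := funext fun k => by
    simpa [mul_apply, mulVec, dotProduct] using congr_fun₂ h k j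
  exact congrFun (eq_zero_of_mulVec_eq_zero hM hcol) i

end Matrix

section FreeAlgebra

open MonoidAlgebra

variable {F α : Type*} [CommSemiring F]

def noncommEval {B : Type*} [Semiring B] [Algebra F B] (A : α → B) :
    MonoidAlgebra F (FreeMonoid α) →ₐ[F] B :=
  MonoidAlgebra.lift F B (FreeMonoid α) (FreeMonoid.lift A)

section Eval

variable {B C : Type*} [Semiring B] [Algebra F B] [Semiring C] [Algebra F C]

@[simp]
lemma noncommEval_single (A : α → B) (w : FreeMonoid α) (c : F) :
    noncommEval A (single w c) = c • FreeMonoid.lift A w :=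
  MonoidAlgebra.lift_single _ _ _

lemma AlgHom.map_noncommEval (Φ : B →ₐ[F] C) (A : α → B) (f : MonoidAlgebra F (FreeMonoid α)) :
    Φ (noncommEval A f) = noncommEval (fun a => Φ (A a)) f := by
  induction f using MonoidAlgebra.induction_linear with
  | zero => simp only [map_zero]
  | add f g hf hg => simp only [map_add, hf, hg]
  | single w c =>
    simp only [noncommEval_single, map_smul]
    exact congrArg (c • ·) (FreeMonoid.hom_map_lift (Φ : B →* C) A w)

end Eval

def leftQuot (a : α) (f : MonoidAlgebra F (FreeMonoid α)) : MonoidAlgebra F (FreeMonoid α) :=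
  .ofCoeff <| f.coeff.comapDomain (FreeMonoid.of a * ·) (mul_right_injective _).injOn

@[simp]
lemma coeff_leftQuot (a : α) (f : MonoidAlgebra F (FreeMonoid α)) (w : FreeMonoid α) :
    (leftQuot a f).coeff w = f.coeff (FreeMonoid.of a * w) := rfl

def wordDegree (f : MonoidAlgebra F (FreeMonoid α)) : ℕ := f.coeff.support.sup FreeMonoid.length

variable {f : MonoidAlgebra F (FreeMonoid α)}

lemma map_support_leftQuot_subset (a : α) :
    (leftQuot a f).coeff.support.map (mulLeftEmbedding (FreeMonoid.of a)) ⊆ f.coeff.support := by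
  intro w hw
  obtain ⟨x, hx, rfl⟩ := mem_map.mp hw
  simpa using hx

lemma card_support_leftQuot_add_card_support_leftQuot_le {a b : α} (hab : a ≠ b) :
    #(leftQuot a f).coeff.support + #(leftQuot b f).coeff.support ≤ #f.coeff.support := by
  classical
  have hdisj : Disjoint ((leftQuot a f).coeff.support.map (mulLeftEmbedding (FreeMonoid.of a)))
      ((leftQuot b f).coeff.support.map (mulLeftEmbedding (FreeMonoid.of b))) := by
    simp [disjoint_left, FreeMonoid.of_mul_eq_of_mul_iff, hab.symm]
  calc #(leftQuot a f).coeff.support + #(leftQuot b f).coeff.support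
      = #((leftQuot a f).coeff.support.map (mulLeftEmbedding (FreeMonoid.of a)) ∪
          (leftQuot b f).coeff.support.map (mulLeftEmbedding (FreeMonoid.of b))) := by
        rw [card_union_of_disjoint hdisj, card_map, card_map]
    _ ≤ #f.coeff.support :=
        card_le_card (union_subset (map_support_leftQuot_subset a) (map_support_leftQuot_subset b))

lemma exists_leftQuot_ne_zero_two_mul_card_support_le {a b : α} (hab : a ≠ b)
    (ha : leftQuot a f ≠ 0) (hb : leftQuot b f ≠ 0) :
    ∃ c, leftQuot c f ≠ 0 ∧ 2 * #(leftQuot c f).coeff.support ≤ #f.coeff.support := by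
  have := card_support_leftQuot_add_card_support_leftQuot_le (f := f) hab
  rcases le_total #(leftQuot a f).coeff.support #(leftQuot b f).coeff.support with hle | hle
  exacts [⟨a, ha, by omega⟩, ⟨b, hb, by omega⟩]

lemma card_support_single_of_mul (c : α) (g : MonoidAlgebra F (FreeMonoid α)) :
    #(single (FreeMonoid.of c) 1 * g).coeff.support = #g.coeff.support := by
  rw [support_coeff_single_mul _ _ (by simp), card_map]

lemma wordDegree_leftQuot_lt {a : α} (h : leftQuot a f ≠ 0) :
    wordDegree (leftQuot a f) < wordDegree f := by
  have hlen : ∀ w ∈ (leftQuot a f).coeff.support, w.length < wordDegree f := fun w hw => by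
    have := le_sup (f := FreeMonoid.length) (map_support_leftQuot_subset a (mem_map_of_mem _ hw))
    simp only [mulLeftEmbedding_apply, FreeMonoid.length_mul, FreeMonoid.length_of] at this
    exact Nat.lt_of_lt_of_le (by omega) this
  obtain ⟨w, hw⟩ := Finsupp.support_nonempty_iff.mpr (mt coeff_eq_zero.mp h)
  exact (Finset.sup_lt_iff (Nat.zero_lt_of_lt (hlen w hw))).mpr hlen

variable [Fintype α]

lemma eq_algebraMap_add_sum_leftQuot (f : MonoidAlgebra F (FreeMonoid α)) :
    f = algebraMap F _ (f.coeff 1) + ∑ a, single (FreeMonoid.of a) 1 * leftQuot a f := by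
  ext w
  induction w using FreeMonoid.casesOn with
  | one => simp [coeff_single_mul_of_forall_mul_ne]
  | of_mul b w =>
    simp only [coeff_add, coeff_sum, Finsupp.add_apply, Finsupp.finsetSum_apply]
    rw [Finset.sum_eq_single b]
    · simp [coeff_single_mul_mul]
    · intro a _ hab
      refine coeff_single_mul_of_forall_mul_ne _ _ fun d h => hab ?_
      exact (FreeMonoid.of_mul_eq_of_mul_iff.mp h).1
    · simp

lemma noncommEval_eq_algebraMap_add_sum {B : Type*} [Semiring B] [Algebra F B] (A : α → B)
    (f : MonoidAlgebra F (FreeMonoid α)) :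
    noncommEval A f = algebraMap F B (f.coeff 1) + ∑ a, A a * noncommEval A (leftQuot a f) := by
  conv_lhs => rw [eq_algebraMap_add_sum_leftQuot f]
  simp [map_sum, Algebra.algebraMap_eq_smul_one]

lemma exists_leftQuot_ne_zero (hf : f ≠ 0) (h1 : f.coeff 1 = 0) : ∃ c, leftQuot c f ≠ 0 := by
  by_contra! h0
  exact hf (by rw [eq_algebraMap_add_sum_leftQuot f]; simp [h1, h0])

lemma eq_single_mul_leftQuot {c : α} (h1 : f.coeff 1 = 0) (h : ∀ a ≠ c, leftQuot a f = 0) :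
    f = single (FreeMonoid.of c) 1 * leftQuot c f := by
  conv_lhs => rw [eq_algebraMap_add_sum_leftQuot f, h1, map_zero, zero_add,
    Finset.sum_eq_single c (fun a _ hac => by rw [h a hac, mul_zero]) (by simp)]

end FreeAlgebra

section Blocks

open Matrix

variable {F α R ι : Type*} [CommSemiring F] [CommSemiring R] [Algebra F R] [Fintype ι]
  [DecidableEq ι] (r : α → Matrix Unit ι R) (B : α → Matrix ι ι R)

lemma FreeMonoid.exists_lift_fromBlocks_eq (w : FreeMonoid α) :
    ∃ P Q, lift (fun a => fromBlocks (0 : Matrix Unit Unit R) (r a) 0 (B a)) w =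
      fromBlocks P Q 0 (lift B w) := by
  induction w using FreeMonoid.recOn with
  | one => exact ⟨1, 0, fromBlocks_one.symm⟩
  | of_mul a w ih =>
    obtain ⟨P, Q, h⟩ := ih
    refine ⟨0, r a * lift B w, ?_⟩
    rw [map_mul, map_mul, lift_eval_of, lift_eval_of, h, fromBlocks_multiply]
    simp

lemma toBlocks₂₂_noncommEval_fromBlocks (f : MonoidAlgebra F (FreeMonoid α)) :
    (noncommEval (fun a => fromBlocks (0 : Matrix Unit Unit R) (r a) 0 (B a)) f).toBlocks₂₂ =
      noncommEval B f := by
  induction f using MonoidAlgebra.induction_linear with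
  | zero => rfl
  | add f g hf hg => rw [map_add, map_add, ← hf, ← hg]; rfl
  | single w c =>
    obtain ⟨P, Q, h⟩ := FreeMonoid.exists_lift_fromBlocks_eq r B w
    simp [h, fromBlocks_smul]

lemma toBlocks₁₂_noncommEval_fromBlocks [Fintype α]
    (f : MonoidAlgebra F (FreeMonoid α)) :
    (noncommEval (fun a => fromBlocks (0 : Matrix Unit Unit R) (r a) 0 (B a)) f).toBlocks₁₂ =
      ∑ a, r a * noncommEval B (leftQuot a f) := by
  rw [noncommEval_eq_algebraMap_add_sum]
  ext u j
  simp only [toBlocks₁₂, Matrix.add_apply, algebraMap_matrix_apply, reduceCtorEq, ↓reduceIte,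
    Matrix.sum_apply, Matrix.mul_apply, Fintype.sum_sum_type, univ_unique, PUnit.default_eq_unit,
    fromBlocks_apply₁₁, Matrix.zero_apply, zero_mul, sum_const_zero, fromBlocks_apply₁₂, zero_add,
    of_apply, ← toBlocks₂₂_noncommEval_fromBlocks r B]
  rfl

variable {r B} in
lemma exists_noncommEval_ne_zero_of_leftQuot [Fintype α] [DecidableEq α]
    {f : MonoidAlgebra F (FreeMonoid α)} {c : α} (h : noncommEval B (leftQuot c f) ≠ 0) :
    ∃ A : α → Matrix (Unit ⊕ ι) (Unit ⊕ ι) R, noncommEval A f ≠ 0 := by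
  obtain ⟨i, j, hij⟩ : ∃ i j, noncommEval B (leftQuot c f) i j ≠ 0 := by
    by_contra! h0
    exact h (Matrix.ext h0)
  -- the top row of `A c` selects row `i` of the bottom-right block
  let r : α → Matrix Unit ι R := Pi.single c (single () i 1)
  refine ⟨fun a => fromBlocks 0 (r a) 0 (B a), fun h0 => hij ?_⟩
  have := congr_fun₂ (toBlocks₁₂_noncommEval_fromBlocks r B f) () j
  rw [h0, Fintype.sum_eq_single c fun a ha => by simp [r, ha]] at this
  simpa [r, toBlocks₁₂] using this.symm

end Blocks

section Generic

open Matrix MvPolynomial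

variable {F α ι : Type*} [CommRing F] [Fintype ι] [DecidableEq ι]

variable (F α) in
def genericMatrix (ι : Type*) (a : α) : Matrix ι ι (MvPolynomial (α × ι × ι) F) :=
  Matrix.of fun i j => X (a, i, j)

lemma noncommEval_eq_map_noncommEval_genericMatrix {R : Type*} [CommRing R] [Algebra F R]
    (A : α → Matrix ι ι R) (f : MonoidAlgebra F (FreeMonoid α)) :
    noncommEval A f =
      (noncommEval (genericMatrix F α ι) f).map (aeval fun x => A x.1 x.2.1 x.2.2) := by
  rw [← AlgHom.mapMatrix_apply, AlgHom.map_noncommEval]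
  congr
  ext a i j
  simp [genericMatrix]

lemma noncommEval_genericMatrix_ne_zero_of_ne_zero {R : Type*} [CommRing R] [Algebra F R]
    {f : MonoidAlgebra F (FreeMonoid α)} (A : α → Matrix ι ι R) (h : noncommEval A f ≠ 0) :
    noncommEval (genericMatrix F α ι) f ≠ 0 := fun h0 => h <| by
  rw [noncommEval_eq_map_noncommEval_genericMatrix, h0, Matrix.map_zero _ (map_zero _)]

lemma totalDegree_lift_genericMatrix_apply_le (w : FreeMonoid α) (i j : ι) :
    (FreeMonoid.lift (genericMatrix F α ι) w i j).totalDegree ≤ w.length := by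
  induction w using FreeMonoid.recOn generalizing i with
  | one => by_cases hij : i = j <;> simp [one_apply, hij]
  | of_mul a w ih =>
    rw [map_mul, FreeMonoid.lift_eval_of, mul_apply, FreeMonoid.length_mul, FreeMonoid.length_of]
    refine (totalDegree_finsetSum _ _).trans (Finset.sup_le fun l _ => ?_)
    refine (totalDegree_mul _ _).trans ?_
    have hX : (X (a, i, l) : MvPolynomial (α × ι × ι) F).totalDegree ≤ 1 :=
      (totalDegree_monomial_le _ _).trans (by simp)
    simpa [genericMatrix, add_comm] using Nat.add_le_add hX (ih l)

lemma totalDegree_noncommEval_genericMatrix_apply_le (f : MonoidAlgebra F (FreeMonoid α))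
    (i j : ι) : (noncommEval (genericMatrix F α ι) f i j).totalDegree ≤ wordDegree f := by
  rw [noncommEval, MonoidAlgebra.lift_apply, Finsupp.sum, Matrix.sum_apply]
  refine (totalDegree_finsetSum _ _).trans (Finset.sup_le fun w hw => ?_)
  exact (totalDegree_smul_le _ _).trans
    ((totalDegree_lift_genericMatrix_apply_le w i j).trans (Finset.le_sup hw))

section Domain

variable [IsDomain F]

lemma det_genericMatrix_ne_zero (a : α) : (genericMatrix F α ι a).det ≠ 0 := by
  let φ : MvPolynomial (α × ι × ι) F →ₐ[F] F := aeval fun x => if x.2.1 = x.2.2 then 1 else 0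
  have hφ : φ.mapMatrix (genericMatrix F α ι a) = 1 := by
    ext i j
    simp [φ, genericMatrix, one_apply]
  intro h
  simpa [AlgHom.map_det, hφ] using congrArg φ h

lemma noncommEval_genericMatrix_single_mul_ne_zero (c : α) {g : MonoidAlgebra F (FreeMonoid α)}
    (h : noncommEval (genericMatrix F α ι) g ≠ 0) :
    noncommEval (genericMatrix F α ι) (MonoidAlgebra.single (FreeMonoid.of c) 1 * g) ≠ 0 := by
  rw [map_mul, noncommEval_single, one_smul, FreeMonoid.lift_eval_of]
  exact fun h0 => h (eq_zero_of_mul_eq_zero_of_det_ne_zero (det_genericMatrix_ne_zero c) h0)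

end Domain

variable [Fintype α] {f : MonoidAlgebra F (FreeMonoid α)}

lemma noncommEval_genericMatrix_ne_zero_of_coeff_one_ne_zero (i : ι) (h : f.coeff 1 ≠ 0) :
    noncommEval (genericMatrix F α ι) f ≠ 0 := by
  refine noncommEval_genericMatrix_ne_zero_of_ne_zero (R := F) (fun _ => 0) fun h0 => h ?_
  rw [noncommEval_eq_algebraMap_add_sum] at h0
  simpa [algebraMap_matrix_apply] using congr_fun₂ h0 i i

variable [DecidableEq α]

lemma noncommEval_genericMatrix_ne_zero_of_leftQuot (i₀ : ι) {c : α}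
    (h : noncommEval (genericMatrix F α {i // i ≠ i₀}) (leftQuot c f) ≠ 0) :
    noncommEval (genericMatrix F α ι) f ≠ 0 := by
  obtain ⟨A, hA⟩ := exists_noncommEval_ne_zero_of_leftQuot h
  let e := reindexAlgEquiv F (MvPolynomial (α × {i // i ≠ i₀} × {i // i ≠ i₀}) F)
    (((Equiv.optionEquivSumPUnit _).trans (Equiv.sumComm _ _)).symm.trans
      (Equiv.optionSubtypeNe i₀))
  refine noncommEval_genericMatrix_ne_zero_of_ne_zero (fun a => e.toAlgHom (A a)) ?_
  rw [← AlgHom.map_noncommEval]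
  exact (map_ne_zero_iff _ e.injective).mpr hA

variable [IsDomain F] in
theorem noncommEval_genericMatrix_ne_zero (hf : f ≠ 0)
    (hι : Nat.clog 2 #f.coeff.support + 1 ≤ Fintype.card ι) :
    noncommEval (genericMatrix F α ι) f ≠ 0 := by
  induction hD : wordDegree f using Nat.strong_induction_on generalizing f ι with
  | _ D ih =>
  obtain ⟨i₀⟩ : Nonempty ι := Fintype.card_pos_iff.mp (by omega)
  obtain h1 | h1 := ne_or_eq (f.coeff 1) 0
  · exact noncommEval_genericMatrix_ne_zero_of_coeff_one_ne_zero i₀ h1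
  by_cases htwo : ∃ a b, a ≠ b ∧ leftQuot a f ≠ 0 ∧ leftQuot b f ≠ 0
  · obtain ⟨a, b, hab, ha, hb⟩ := htwo
    obtain ⟨c, hc, hct⟩ := exists_leftQuot_ne_zero_two_mul_card_support_le hab ha hb
    have hclog := Nat.clog_two_add_one_le_of_two_mul_le
      (card_pos.mpr (Finsupp.support_nonempty_iff.mpr (mt MonoidAlgebra.coeff_eq_zero.mp hc))) hct
    have hcard : Fintype.card {i // i ≠ i₀} + 1 = Fintype.card ι := by
      rw [← Fintype.card_option, Fintype.card_congr (Equiv.optionSubtypeNe i₀)]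
    exact noncommEval_genericMatrix_ne_zero_of_leftQuot i₀
      (ih _ ((wordDegree_leftQuot_lt hc).trans_eq hD) hc (by omega) rfl)
  · push Not at htwo
    obtain ⟨c, hc⟩ := exists_leftQuot_ne_zero hf h1
    have hfc := eq_single_mul_leftQuot h1 fun a hac => by_contra fun ha => hc (htwo a c hac ha)
    rw [hfc, card_support_single_of_mul] at hι
    rw [hfc]
    exact noncommEval_genericMatrix_single_mul_ne_zero c
      (ih _ ((wordDegree_leftQuot_lt hc).trans_eq hD) hc hι rfl)

end Generic

/-- Bivariate case of the main theorem: if `|F| > D` and `f ∈ F⟨x₀,x₁⟩` is nonzero of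
degree `D` with `t` nonzero monomials, then there are matrices
`A₀, A₁ ∈ M_{k+1}(F)`, `k = ⌈log₂ t⌉`, with `f(A₀, A₁) ≠ 0`. -/
theorem bivariate_not_identity {F : Type*} [Field F]
    (f : MonoidAlgebra F (FreeMonoid Bool)) (hf : f ≠ 0)
    (hF : ((f.coeff.support.sup fun w => w.length : ℕ) : ℕ∞) < ENat.card F) :
    ∃ A : Bool → Matrix (Fin (Nat.clog 2 f.coeff.support.card + 1))
        (Fin (Nat.clog 2 f.coeff.support.card + 1)) F,
      evalMat2 A f ≠ 0 := by
  set n := Nat.clog 2 f.coeff.support.card + 1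
  obtain ⟨i, j, hij⟩ : ∃ i j, noncommEval (genericMatrix F Bool (Fin n)) f i j ≠ 0 := by
    by_contra! h0
    exact noncommEval_genericMatrix_ne_zero hf (by simp [n]) (Matrix.ext h0)
  obtain ⟨v, hv⟩ := MvPolynomial.exists_eval_ne_zero_of_totalDegree_lt_card hij
    (lt_of_le_of_lt (by exact_mod_cast totalDegree_noncommEval_genericMatrix_apply_le f i j) hF)
  let A : Bool → Matrix (Fin n) (Fin n) F := fun b => Matrix.of fun i j => v (b, i, j)
  refine ⟨A, fun h0 => hv ?_⟩
  have := congr_fun₂ (noncommEval_eq_map_noncommEval_genericMatrix A f) i j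
  rw [show noncommEval A f = evalMat2 A f from rfl, h0] at this
  simpa [MvPolynomial.coe_aeval_eq_eval, A] using this.symm

end
end
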